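/- Let X be a CAT(0) cube complex with at least one hyperplane and no infinite family of pairwise-crossing hyperplanes. Then X is combinatorially geodesically complete if and only if every combinatorial geodesic segment and every combinatorial geodesic ray in X is contained in a bi-infinite combinatorial geodesic. -/

import Mathlib

/-!
Combinatorial model of a CAT(0) cube complex via Sageev duality.

`V` is the set of 0-cubes, `H` the set of hyperplanes, and `side h x : Bool`
records which halfspace of the hyperplane `h` contains the 0-cube `x`.
The axioms say exactly that `V` is the set of consistent orientations of the
hyperplanes, each differing from a fixed one on finitely many hyperplanes;
this is precisely the combinatorial data of (the 0-skeleton of) a CAT(0) cube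
complex, together with its hyperplane structure.
-/
structure CCC where
  V : Type
  H : Type
  side : H → V → Bool
  nonempty_V : Nonempty V
  vertex_ext : ∀ x y : V, (∀ h, side h x = side h y) → x = y
  sep_finite : ∀ x y : V, {h : H | side h x ≠ side h y}.Finite
  halfspace_nonempty : ∀ h b, ∃ x, side h x = b
  hyp_inj : ∀ h h' : H, (∀ x, side h x = side h' x) → h = h'
  hyp_inj' : ∀ h h' : H, (∀ x, side h x = !(side h' x)) → h = h'
  realize : ∀ (o : H → Bool) (x : V),
    (∀ h h', ∃ y, side h y = o h ∧ side h' y = o h') →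
    {h : H | o h ≠ side h x}.Finite →
    ∃ y, ∀ h, side h y = o h

namespace CCC

variable (X : CCC)

/-- The combinatorial (1-skeleton) distance between 0-cubes: the number of
separating hyperplanes. -/
noncomputable def dist (x y : X.V) : ℕ := (X.sep_finite x y).toFinset.card

/-- Two 0-cubes are adjacent (joined by a 1-cube) iff exactly one hyperplane
separates them. -/
def Adj (x y : X.V) : Prop :=
  ∃ h, X.side h x ≠ X.side h y ∧ ∀ h', X.side h' x ≠ X.side h' y → h' = h

/-- Two hyperplanes cross iff all four quarter-spaces are nonempty. -/
def Crosses (h h' : X.H) : Prop :=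
  ∀ b b' : Bool, ∃ x, X.side h x = b ∧ X.side h' x = b'

/-- The hyperplane `h'` lies in the halfspace `b` of the hyperplane `h`. -/
def InHalf (h' h : X.H) (b : Bool) : Prop :=
  h' ≠ h ∧ ∃ c : Bool, ∀ x, X.side h x = !b → X.side h' x = c

/-- `h` separates the hyperplanes `h₁` and `h₂`. -/
def SepH (h h₁ h₂ : X.H) : Prop :=
  ∃ b : Bool, X.InHalf h₁ h b ∧ X.InHalf h₂ h (!b)

/-- Two distinct hyperplanes contact iff no third hyperplane separates them. -/
def Contact (h h' : X.H) : Prop := h ≠ h' ∧ ¬ ∃ h'', X.SepH h'' h h'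

/-- A facing triple: three distinct hyperplanes, each having a halfspace
containing the other two. -/
def FacingTriple (h₁ h₂ h₃ : X.H) : Prop :=
  h₁ ≠ h₂ ∧ h₁ ≠ h₃ ∧ h₂ ≠ h₃ ∧
  ∃ b₁ b₂ b₃ : Bool,
    X.InHalf h₂ h₁ b₁ ∧ X.InHalf h₃ h₁ b₁ ∧
    X.InHalf h₁ h₂ b₂ ∧ X.InHalf h₃ h₂ b₂ ∧
    X.InHalf h₁ h₃ b₃ ∧ X.InHalf h₂ h₃ b₃

/-- A set of hyperplanes is inseparable if every hyperplane separating two of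
its members belongs to it. -/
def Inseparable (U : Set X.H) : Prop :=
  ∀ u ∈ U, ∀ u' ∈ U, ∀ h, X.SepH h u u' → h ∈ U

/-- A set of hyperplanes is unidirectional if each member has a halfspace
containing only finitely many members. -/
def Unidirectional (U : Set X.H) : Prop :=
  ∀ u ∈ U, ∃ b : Bool, {h | h ∈ U ∧ X.InHalf h u b}.Finite

def NoFacingTriple (U : Set X.H) : Prop :=
  ∀ h₁ ∈ U, ∀ h₂ ∈ U, ∀ h₃ ∈ U, ¬ X.FacingTriple h₁ h₂ h₃

/-- A unidirectional boundary set (UBS). -/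
def IsUBS (U : Set X.H) : Prop :=
  U.Infinite ∧ X.Inseparable U ∧ X.Unidirectional U ∧ X.NoFacingTriple U

/-- Almost-equivalence: finite symmetric difference. -/
def AlmostEq (U U' : Set X.H) : Prop := (symmDiff U U').Finite

/-- A minimal UBS. -/
def MinUBS (U : Set X.H) : Prop :=
  X.IsUBS U ∧ ∀ U' ⊆ U, X.IsUBS U' → X.AlmostEq U U'

/-- The simplex (= almost-equivalence class of UBSs) represented by `U` is a
face of the simplex represented by `V`. -/
def FaceOf (U V : Set X.H) : Prop :=
  ∃ U' V', X.IsUBS U' ∧ X.IsUBS V' ∧ X.AlmostEq U U' ∧ X.AlmostEq V V' ∧ U' ⊆ V'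

/-- `U` decomposes, up to almost-equivalence, into `k` pairwise disjoint
minimal UBSs; i.e. the class of `U` is a `(k-1)`-simplex of `∂X`. -/
def HasDim (U : Set X.H) (k : ℕ) : Prop :=
  ∃ 𝒰 : Fin k → Set X.H, (∀ i, X.MinUBS (𝒰 i)) ∧
    (∀ i j, i ≠ j → Disjoint (𝒰 i) (𝒰 j)) ∧ X.AlmostEq U (⋃ i, 𝒰 i)

/-- No infinite family of pairwise-crossing hyperplanes. -/
def NoInfiniteCrossing : Prop :=
  ∀ S : Set X.H, (∀ h ∈ S, ∀ h' ∈ S, h ≠ h' → X.Crosses h h') → S.Finite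

def LocallyFinite : Prop := ∀ x : X.V, {y | X.Adj x y}.Finite

/-- A combinatorial geodesic ray (parameterized by its vertices). -/
def IsGeodesicRay (γ : ℕ → X.V) : Prop :=
  ∀ m n : ℕ, m ≤ n → X.dist (γ m) (γ n) = n - m

/-- A bi-infinite combinatorial geodesic. -/
def IsGeodesicLine (α : ℤ → X.V) : Prop :=
  ∀ m n : ℤ, m ≤ n → (X.dist (α m) (α n) : ℤ) = n - m

/-- A combinatorial geodesic segment of length `n`. -/
def IsGeodSeg (c : ℕ → X.V) (n : ℕ) : Prop :=
  ∀ i j : ℕ, i ≤ j → j ≤ n → X.dist (c i) (c j) = j - i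

/-- The set of hyperplanes crossing (dual to the 1-cubes of) the path `γ`. -/
def WSet (γ : ℕ → X.V) : Set X.H :=
  {h | ∃ n : ℕ, X.side h (γ n) ≠ X.side h (γ (n+1))}

/-- The 0-cubes of the carrier `N(h)` of the hyperplane `h`. -/
def carrier (h : X.H) : Set X.V :=
  {x | ∃ y, X.Adj x y ∧ X.side h x ≠ X.side h y}

/-- An essential hyperplane: each halfspace contains 0-cubes arbitrarily far
from the carrier. -/
def EssentialHyp (h : X.H) : Prop :=
  ∀ b : Bool, ∀ n : ℕ, ∃ x, X.side h x = b ∧ ∀ y ∈ X.carrier h, n ≤ X.dist x y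

/-- Combinatorial convexity of a set of 0-cubes (the 0-skeleton of a convex
subcomplex). -/
def IsConvexSet (S : Set X.V) : Prop :=
  ∀ x ∈ S, ∀ y ∈ S, ∀ z, X.dist x z + X.dist z y = X.dist x y → z ∈ S

/-- `x` and `y` are joined by a combinatorial path avoiding `S`. -/
def ReachAvoid (S : Set X.V) (x y : X.V) : Prop :=
  ∃ (n : ℕ) (c : ℕ → X.V), c 0 = x ∧ c n = y ∧
    (∀ i < n, X.Adj (c i) (c (i+1))) ∧ ∀ i ≤ n, c i ∉ S

/-- No compact (finite) convex subcomplex disconnects `X`. -/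
def CompactlyIndecomposable : Prop :=
  ∀ K : Set X.V, K.Finite → X.IsConvexSet K →
    ∀ x y : X.V, x ∉ K → y ∉ K → X.ReachAvoid K x y

/-- `γ` bounds an eighth-flat: some eighth-flat (the subcomplex of the standard
tiling of `[0,∞)²` below the graph of an unbounded nondecreasing function)
embeds isometrically and cubically in `X` with image containing `γ`. -/
def BoundsEighthFlat (γ : ℕ → X.V) : Prop :=
  ∃ g : ℕ → ℕ, Monotone g ∧ (∀ N : ℕ, ∃ m, N ≤ g m) ∧
    ∃ e : {p : ℕ × ℕ // p.2 ≤ g p.1} → X.V,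
      (∀ p q, X.dist (e p) (e q) = Nat.dist p.1.1 q.1.1 + Nat.dist p.1.2 q.1.2) ∧
      ∀ n : ℕ, ∃ p, e p = γ n

/-- An edge-chain in the contact graph. -/
def CChain (c : ℕ → X.H) (n : ℕ) : Prop := ∀ i < n, X.Contact (c i) (c (i+1))

/-- Distance in the contact graph `C(X)` (`⊤` if there is no path). -/
noncomputable def cdist (h h' : X.H) : ℕ∞ :=
  sInf {e : ℕ∞ | ∃ (n : ℕ) (c : ℕ → X.H), c 0 = h ∧ c n = h' ∧ X.CChain c n ∧ e = n}

/-- An edge-chain in the crossing graph. -/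
def XChain (c : ℕ → X.H) (n : ℕ) : Prop := ∀ i < n, X.Crosses (c i) (c (i+1))

/-- Distance in the crossing graph `Δ(X)`. -/
noncomputable def xdist (h h' : X.H) : ℕ∞ :=
  sInf {e : ℕ∞ | ∃ (n : ℕ) (c : ℕ → X.H), c 0 = h ∧ c n = h' ∧ X.XChain c n ∧ e = n}

/-- Distance in the full subgraph `Λ(γ)` of the contact graph spanned by the
hyperplanes crossing `γ`. -/
noncomputable def ldist (γ : ℕ → X.V) (h h' : X.H) : ℕ∞ :=
  sInf {e : ℕ∞ | ∃ (n : ℕ) (c : ℕ → X.H), c 0 = h ∧ c n = h' ∧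
    (∀ i ≤ n, c i ∈ X.WSet γ) ∧ X.CChain c n ∧ e = n}

/-- Two 0-simplices of `∂X` (represented by minimal UBSs) are adjacent in the
1-skeleton of `∂X`. -/
def BAdj (U V : Set X.H) : Prop :=
  X.MinUBS U ∧ X.MinUBS V ∧ ¬ X.AlmostEq U V ∧
    ∃ W, X.IsUBS W ∧ X.FaceOf U W ∧ X.FaceOf V W

/-- Distance in the 1-skeleton of the simplicial boundary `∂X`, between the
0-simplices represented by the minimal UBSs `U` and `V`. -/
noncomputable def bdist (U V : Set X.H) : ℕ∞ :=
  sInf {e : ℕ∞ | ∃ (n : ℕ) (c : ℕ → Set X.H),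
    X.AlmostEq (c 0) U ∧ X.AlmostEq (c n) V ∧ (∀ i ≤ n, X.MinUBS (c i)) ∧
    (∀ i < n, X.BAdj (c i) (c (i+1)) ∨ X.AlmostEq (c i) (c (i+1))) ∧ e = n}

/-- Diameter of the contact graph. -/
noncomputable def cdiam : ℕ∞ := ⨆ (h : X.H) (h' : X.H), X.cdist h h'

/-- Diameter of the crossing graph. -/
noncomputable def xdiam : ℕ∞ := ⨆ (h : X.H) (h' : X.H), X.xdist h h'

/-- Diameter of the 1-skeleton of the simplicial boundary. -/
noncomputable def bdiam : ℕ∞ :=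
  ⨆ (U : Set X.H) (V : Set X.H) (_ : X.MinUBS U) (_ : X.MinUBS V), X.bdist U V

/-- A consistent orientation of the hyperplanes: any two chosen halfspaces
intersect. -/
def Consistent (χ : X.H → Bool) : Prop :=
  ∀ h h', ∃ x, X.side h x = χ h ∧ X.side h' x = χ h'

/-- The halfspace `b` of `h`, as a set of 0-cubes. -/
def Hs (h : X.H) (b : Bool) : Set X.V := {x | X.side h x = b}

/-- Every simplex of `∂X` is visible, i.e. represented by the set of
hyperplanes crossing some combinatorial geodesic ray. -/
def FullyVisible : Prop :=
  ∀ V, X.IsUBS V → ∃ γ : ℕ → X.V, X.IsGeodesicRay γ ∧ X.AlmostEq (X.WSet γ) V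

/-- The halfspace `b` of `h` is shallow: it lies within uniformly bounded
distance of the carrier of `h`. -/
def ShallowHalf (h : X.H) (b : Bool) : Prop :=
  ∃ R : ℕ, ∀ x, X.side h x = b → ∃ y ∈ X.carrier h, X.dist x y ≤ R

/-- An `r`-avoiding combinatorial path (with respect to the basepoint `x₀`)
of length `n` from `a` to `b`. -/
def AvoidPathLen (x₀ : X.V) (r : ℕ) (a b : X.V) (n : ℕ) : Prop :=
  ∃ c : ℕ → X.V, c 0 = a ∧ c n = b ∧
    (∀ i < n, X.Adj (c i) (c (i+1))) ∧ ∀ i ≤ n, r ≤ X.dist (c i) x₀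

/-- Combinatorial geodesic completeness: for every (finite) maximal family of
pairwise-crossing hyperplanes and every choice of halfspaces, the intersection
of the chosen halfspaces contains 0-cubes arbitrarily far from the
intersection of the carriers. -/
def CombGeodComplete : Prop :=
  ∀ (n : ℕ) (W : Fin n → X.H), Function.Injective W →
    (∀ i j, i ≠ j → X.Crosses (W i) (W j)) →
    (∀ h, ¬ ∀ i, X.Crosses h (W i)) →
    ∀ χ : Fin n → Bool, ∀ R : ℕ,
      ∃ x, (∀ i, X.side (W i) x = χ i) ∧
        ∀ y, (∀ i, y ∈ X.carrier (W i)) → R ≤ X.dist x y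

/-- `X` decomposes as a product of two unbounded convex subcomplexes:
equivalently, the hyperplanes split into two parts, each member of one part
crossing each member of the other, both factors being unbounded. -/
def ProductDecomp : Prop :=
  ∃ H₁ H₂ : Set X.H, Disjoint H₁ H₂ ∧ H₁ ∪ H₂ = Set.univ ∧
    (∀ h₁ ∈ H₁, ∀ h₂ ∈ H₂, X.Crosses h₁ h₂) ∧
    (∀ n : ℕ, ∃ x y : X.V, n ≤ ({h | X.side h x ≠ X.side h y} ∩ H₁).ncard) ∧
    (∀ n : ℕ, ∃ x y : X.V, n ≤ ({h | X.side h x ≠ X.side h y} ∩ H₂).ncard)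

/-- `∂X` decomposes as the simplicial join of two disjoint nonempty
subcomplexes: the 0-simplices split into two nonempty parts, any 0-simplex of
one part spanning a 1-simplex with any 0-simplex of the other. -/
def JoinDecomp : Prop :=
  ∃ 𝒜₁ 𝒜₂ : Set (Set X.H),
    (∀ U ∈ 𝒜₁, X.MinUBS U) ∧ (∀ U ∈ 𝒜₂, X.MinUBS U) ∧
    𝒜₁.Nonempty ∧ 𝒜₂.Nonempty ∧
    (∀ U U', U ∈ 𝒜₁ → X.MinUBS U' → X.AlmostEq U U' → U' ∈ 𝒜₁) ∧
    (∀ U U', U ∈ 𝒜₂ → X.MinUBS U' → X.AlmostEq U U' → U' ∈ 𝒜₂) ∧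
    (∀ U, X.MinUBS U → U ∈ 𝒜₁ ∨ U ∈ 𝒜₂) ∧
    (∀ U ∈ 𝒜₁, ∀ V ∈ 𝒜₂, ¬ X.AlmostEq U V) ∧
    (∀ U ∈ 𝒜₁, ∀ V ∈ 𝒜₂, ∃ W, X.IsUBS W ∧ X.FaceOf U W ∧ X.FaceOf V W)

/-! Relative versions of the hyperplane notions, for a (convex) subcomplex
with 0-cube set `S`; the hyperplanes of the subcomplex are the hyperplanes of
`X` crossing it. -/

/-- `h` crosses the subcomplex with 0-cubes `S`. -/
def CrossesSet (S : Set X.V) (h : X.H) : Prop :=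
  ∃ x ∈ S, ∃ y ∈ S, X.side h x ≠ X.side h y

def InHalfOn (S : Set X.V) (h' h : X.H) (b : Bool) : Prop :=
  h' ≠ h ∧ ∃ c : Bool, ∀ x ∈ S, X.side h x = !b → X.side h' x = c

def SepHOn (S : Set X.V) (h h₁ h₂ : X.H) : Prop :=
  X.CrossesSet S h ∧ ∃ b : Bool, X.InHalfOn S h₁ h b ∧ X.InHalfOn S h₂ h (!b)

def InseparableOn (S : Set X.V) (U : Set X.H) : Prop :=
  ∀ u ∈ U, ∀ u' ∈ U, ∀ h, X.SepHOn S h u u' → h ∈ U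

def UnidirectionalOn (S : Set X.V) (U : Set X.H) : Prop :=
  ∀ u ∈ U, ∃ b : Bool, {h | h ∈ U ∧ X.InHalfOn S h u b}.Finite

def NoFacingTripleOn (S : Set X.V) (U : Set X.H) : Prop :=
  ∀ h₁ ∈ U, ∀ h₂ ∈ U, ∀ h₃ ∈ U, ¬ (h₁ ≠ h₂ ∧ h₁ ≠ h₃ ∧ h₂ ≠ h₃ ∧
    ∃ b₁ b₂ b₃ : Bool,
      X.InHalfOn S h₂ h₁ b₁ ∧ X.InHalfOn S h₃ h₁ b₁ ∧
      X.InHalfOn S h₁ h₂ b₂ ∧ X.InHalfOn S h₃ h₂ b₂ ∧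
      X.InHalfOn S h₁ h₃ b₃ ∧ X.InHalfOn S h₂ h₃ b₃)

/-- A UBS of the subcomplex with 0-cube set `S`. -/
def IsUBSOn (S : Set X.V) (U : Set X.H) : Prop :=
  (∀ h ∈ U, X.CrossesSet S h) ∧ U.Infinite ∧ X.InseparableOn S U ∧
    X.UnidirectionalOn S U ∧ X.NoFacingTripleOn S U

def MinUBSOn (S : Set X.V) (U : Set X.H) : Prop :=
  X.IsUBSOn S U ∧ ∀ U' ⊆ U, X.IsUBSOn S U' → X.AlmostEq U U'

def FaceOfOn (S : Set X.V) (U V : Set X.H) : Prop :=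
  ∃ U' V', X.IsUBSOn S U' ∧ X.IsUBSOn S V' ∧ X.AlmostEq U U' ∧ X.AlmostEq V V' ∧ U' ⊆ V'

def HasDimOn (S : Set X.V) (U : Set X.H) (k : ℕ) : Prop :=
  ∃ 𝒰 : Fin k → Set X.H, (∀ i, X.MinUBSOn S (𝒰 i)) ∧
    (∀ i j, i ≠ j → Disjoint (𝒰 i) (𝒰 j)) ∧ X.AlmostEq U (⋃ i, 𝒰 i)

end CCC

/-!
To prolong a geodesic beyond its endpoint `v` one needs a neighbour of `v` across a hyperplane
the geodesic does not cross. Among the crossed hyperplanes, those whose `v`-halfspace is minimal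
pairwise cross; completing them to a maximal (hence finite) crossing family, geodesic
completeness provides a 0-cube `x ≠ v` in all their `v`-halfspaces, hence in the `v`-halfspace of
every crossed hyperplane, and the first edge of a geodesic from `v` to `x` does the job.
Iterating yields rays, then bi-infinite geodesics.

Conversely, given a maximal crossing family `W` and orientations `χ`, join the corner of the cube
opposite to `χ` to the `χ`-corner `q` by a geodesic and prolong it to a ray. The hyperplanes the
ray crosses after `q` are not in `W`, so the ray stays in the `χ`-halfspaces, and each of them
separates the ray from the intersection of the carriers, which agrees with `q` off `W`.
-/

namespace CCC

open scoped Classical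

noncomputable def sepF (X : CCC) (x y : X.V) : Finset X.H := (X.sep_finite x y).toFinset

variable {X : CCC}

@[simp] lemma mem_sepF {x y : X.V} {h : X.H} : h ∈ X.sepF x y ↔ X.side h x ≠ X.side h y := by
  simp [sepF]

lemma dist_eq_card_sepF (x y : X.V) : X.dist x y = (X.sepF x y).card := rfl

lemma sepF_comm (x y : X.V) : X.sepF x y = X.sepF y x := by
  ext h
  simp [ne_comm]

lemma dist_comm (x y : X.V) : X.dist x y = X.dist y x := by
  rw [dist_eq_card_sepF, dist_eq_card_sepF, sepF_comm]

@[simp] lemma dist_self (x : X.V) : X.dist x x = 0 := by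
  simp [dist_eq_card_sepF, Finset.eq_empty_iff_forall_notMem]

lemma eq_of_dist_eq_zero {x y : X.V} (h : X.dist x y = 0) : x = y :=
  X.vertex_ext x y fun k => by
    by_contra hk
    exact Finset.card_ne_zero_of_mem (mem_sepF.2 hk) h

lemma sepF_subset_union (x y z : X.V) : X.sepF x z ⊆ X.sepF x y ∪ X.sepF y z := by
  intro h
  simp only [Finset.mem_union, mem_sepF]
  intro hxz
  by_contra! hc
  exact hxz (hc.1.trans hc.2)

lemma sepF_union_eq_of_dist_add {x y z : X.V} (h : X.dist x y + X.dist y z = X.dist x z) :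
    X.sepF x y ∪ X.sepF y z = X.sepF x z :=
  (Finset.eq_of_subset_of_card_le (sepF_subset_union x y z)
    ((Finset.card_union_le _ _).trans h.le)).symm

lemma disjoint_sepF_of_dist_add {x y z : X.V} (h : X.dist x y + X.dist y z = X.dist x z) :
    Disjoint (X.sepF x y) (X.sepF y z) := by
  rw [← Finset.card_union_eq_card_add_card, sepF_union_eq_of_dist_add h]
  exact h.symm

lemma dist_eq_add_one_of_sepF_eq_singleton {u v w : X.V} {h₀ : X.H}
    (huv : X.sepF u v = {h₀}) (hw : h₀ ∉ X.sepF u w) : X.dist v w = X.dist u w + 1 := by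
  have hsep : X.sepF v w = insert h₀ (X.sepF u w) := by
    ext h
    have huv' := Finset.ext_iff.1 huv h
    simp only [mem_sepF, Finset.mem_singleton, Finset.mem_insert] at huv' hw ⊢
    by_cases hh : h = h₀
    · subst hh
      simp only [true_or, iff_true]
      exact fun e => huv'.2 rfl ((not_not.1 hw).trans e.symm)
    · simp only [hh, false_or]
      rw [not_not.1 (mt huv'.1 hh)]
  rw [dist_eq_card_sepF, hsep, Finset.card_insert_of_notMem hw, dist_eq_card_sepF]

@[simp] lemma mem_Hs {h : X.H} {b : Bool} {x : X.V} : x ∈ X.Hs h b ↔ X.side h x = b := Iff.rfl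

lemma Hs_not (h : X.H) (b : Bool) : X.Hs h (!b) = (X.Hs h b)ᶜ := by
  ext x
  simp [Bool.eq_not_iff]

lemma eq_of_Hs_eq {h h' : X.H} {b b' : Bool} (he : X.Hs h b = X.Hs h' b') : h = h' := by
  have hx : ∀ x, X.side h x = b ↔ X.side h' x = b' := fun x => Set.ext_iff.1 he x
  rcases Bool.eq_or_eq_not b' b with rfl | rfl
  · exact X.hyp_inj h h' fun x => by
      have := hx x
      revert this
      cases b' <;> cases X.side h x <;> cases X.side h' x <;> decide
  · exact X.hyp_inj' h h' fun x => by
      have := hx x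
      revert this
      cases b <;> cases X.side h x <;> cases X.side h' x <;> decide

lemma crosses_symm {h h' : X.H} (hc : X.Crosses h h') : X.Crosses h' h := fun b b' =>
  let ⟨x, hx, hx'⟩ := hc b' b
  ⟨x, hx', hx⟩

lemma not_crosses_self (h : X.H) : ¬ X.Crosses h h := fun hc => by
  obtain ⟨x, hx, hx'⟩ := hc true false
  exact Bool.true_eq_false ▸ hx.symm.trans hx' |>.elim

lemma exists_Hs_subset_of_not_crosses {h k : X.H} (hhk : ¬ X.Crosses h k) :
    ∃ β b, X.Hs k β ⊆ X.Hs h b := by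
  simp only [Crosses, not_forall, not_exists, not_and] at hhk
  obtain ⟨b, β, hb⟩ := hhk
  exact ⟨β, !b, fun x hx => Bool.eq_not_iff.2 fun e => hb x e hx⟩

lemma consistent_of_forall_Hs_subset {ι : Type*} {W : ι → X.H}
    (hW : Pairwise fun i j => X.Crosses (W i) (W j)) {o : X.H → Bool}
    (ho : ∀ h, ∃ i β, X.Hs (W i) β ⊆ X.Hs h (o h)) : X.Consistent o := by
  intro h h'
  obtain ⟨i, β, hi⟩ := ho h
  obtain ⟨j, β', hj⟩ := ho h'
  obtain hij | rfl := ne_or_eq i j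
  · obtain ⟨y, hy, hy'⟩ := hW hij β β'
    exact ⟨y, hi hy, hj hy'⟩
  obtain rfl | rfl := Bool.eq_or_eq_not β' β
  · obtain ⟨y, hy⟩ := X.halfspace_nonempty (W i) β'
    exact ⟨y, hi hy, hj hy⟩
  -- otherwise `Hs (W i) β ⊆ Hs h (o h) ⊆ Hs h' (!o h') ⊆ Hs (W i) β` forces `h = W i = h'`
  by_contra! hdisj
  have h₁ : X.Hs h (o h) ⊆ X.Hs h' (!o h') := fun y hy => Bool.eq_not_iff.2 (hdisj y hy)
  have h₂ : X.Hs h' (!o h') ⊆ X.Hs (W i) β := by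
    simpa only [Hs_not, compl_compl] using Set.compl_subset_compl.2 hj
  have hh : h = h' := (eq_of_Hs_eq (hi.antisymm (h₁.trans h₂))).symm.trans
    (eq_of_Hs_eq ((hi.trans h₁).antisymm h₂))
  subst hh
  obtain ⟨y, hy⟩ := X.halfspace_nonempty h (o h)
  exact hdisj y hy hy

lemma exists_vertex_of_forall_Hs_subset {ι : Type*} [Finite ι] {W : ι → X.H}
    (hW : Pairwise fun i j => X.Crosses (W i) (W j)) {o : X.H → Bool}
    (ho : ∀ h, ∃ i β, X.Hs (W i) β ⊆ X.Hs h (o h)) : ∃ y, ∀ h, X.side h y = o h := by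
  obtain ⟨x₀⟩ := X.nonempty_V
  refine X.realize o x₀ (consistent_of_forall_Hs_subset hW ho) ?_
  choose i β hiβ using ho
  choose y hy using fun p : ι × Bool => X.halfspace_nonempty (W p.1) p.2
  refine (Set.finite_iUnion fun p => X.sep_finite (y p) x₀).subset fun h hh => ?_
  refine Set.mem_iUnion.2 ⟨(i h, β h), ?_⟩
  rw [Set.mem_ofPred_eq, mem_Hs.1 (hiβ h (hy (i h, β h)))]
  exact hh

lemma exists_sepF_eq_singleton {v : X.V} {h₀ : X.H}
    (hquarter : ∀ h ≠ h₀, ∃ y, X.side h₀ y ≠ X.side h₀ v ∧ X.side h y = X.side h v) :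
    ∃ v', X.sepF v v' = {h₀} := by
  set o := Function.update (fun h => X.side h v) h₀ (!X.side h₀ v)
  have hquarter' : ∀ h, ∃ y, X.side h₀ y = o h₀ ∧ X.side h y = o h := fun h => by
    by_cases hh : h = h₀
    · subst hh
      obtain ⟨y, hy⟩ := X.halfspace_nonempty h (!X.side h v)
      exact ⟨y, by simpa [o] using hy, by simpa [o] using hy⟩
    · obtain ⟨y, hy₀, hy⟩ := hquarter h hh
      exact ⟨y, by simpa [o, Bool.eq_not_iff] using hy₀, by simpa [o, hh] using hy⟩
  have hcons : X.Consistent o := fun h h' => by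
    by_cases hh : h = h₀
    · subst hh
      exact hquarter' h'
    by_cases hh' : h' = h₀
    · subst hh'
      obtain ⟨y, hy₀, hy⟩ := hquarter' h
      exact ⟨y, hy, hy₀⟩
    · exact ⟨v, by simp [o, hh], by simp [o, hh']⟩
  have hfin : {h | o h ≠ X.side h v}.Finite := (Set.finite_singleton h₀).subset fun h hh => by
    by_contra hne
    simp [o, show h ≠ h₀ from hne] at hh
  obtain ⟨v', hv'⟩ := X.realize o v hcons hfin
  refine ⟨v', Finset.ext fun h => ?_⟩
  by_cases hh : h = h₀ <;> simp [hv', o, hh]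

/-- A first edge from `v` towards `x` crosses the separating hyperplane whose `x`-halfspace is
maximal. -/
lemma exists_sepF_eq_singleton_mem {v x : X.V} (hvx : v ≠ x) :
    ∃ v' h₀, X.sepF v v' = {h₀} ∧ h₀ ∈ X.sepF v x := by
  obtain ⟨h, hh⟩ : ∃ h, X.side h v ≠ X.side h x := by
    by_contra! hall
    exact hvx (X.vertex_ext v x hall)
  obtain ⟨h₀, hh₀, hmax⟩ := Set.Finite.exists_maximalFor (fun h => X.Hs h (X.side h x))
    _ (X.sep_finite v x) ⟨h, hh⟩
  obtain ⟨v', hv'⟩ := exists_sepF_eq_singleton (v := v) (h₀ := h₀) fun h hne => by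
    by_cases hs : X.side h v = X.side h x
    · exact ⟨x, Ne.symm hh₀, hs.symm⟩
    by_contra! hq
    have hsub : X.Hs h₀ (X.side h₀ x) ⊆ X.Hs h (X.side h x) := fun y hy =>
      (Bool.eq_not_iff.2 (hq y (hy ▸ Ne.symm hh₀))).trans (Bool.eq_not_iff.2 (Ne.symm hs)).symm
    exact hne (eq_of_Hs_eq (hsub.antisymm (hmax hs hsub))).symm
  exact ⟨v', h₀, hv', mem_sepF.2 hh₀⟩

section Cube

variable {ι : Type*} {W : ι → X.H} {o : X.H → Bool}

lemma exists_orientation_of_maximal (hmax : ∀ h, ¬ ∀ i, X.Crosses h (W i)) :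
    ∃ o : X.H → Bool, ∀ h, ∃ i β, X.Hs (W i) β ⊆ X.Hs h (o h) := by
  have : ∀ h, ∃ b i β, X.Hs (W i) β ⊆ X.Hs h b := fun h => by
    obtain ⟨i, hi⟩ := not_forall.1 (hmax h)
    obtain ⟨β, b, hb⟩ := exists_Hs_subset_of_not_crosses hi
    exact ⟨b, i, β, hb⟩
  choose o ho using this
  exact ⟨o, ho⟩

lemma exists_corner [Finite ι] (hinj : Function.Injective W)
    (hW : Pairwise fun i j => X.Crosses (W i) (W j))
    (ho : ∀ h, ∃ i β, X.Hs (W i) β ⊆ X.Hs h (o h)) (χ : ι → Bool) :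
    ∃ y, (∀ i, X.side (W i) y = χ i) ∧ ∀ h ∉ Set.range W, X.side h y = o h := by
  obtain ⟨y, hy⟩ := exists_vertex_of_forall_Hs_subset hW (o := Function.extend W χ o)
    fun h => by
      by_cases hh : ∃ i, W i = h
      · obtain ⟨i, rfl⟩ := hh
        exact ⟨i, χ i, by rw [hinj.extend_apply]⟩
      · rw [Function.extend_apply' _ _ _ hh]
        exact ho h
  exact ⟨y, fun i => (hy _).trans (hinj.extend_apply χ o i),
    fun h hh => (hy h).trans (Function.extend_apply' _ _ _ hh)⟩

lemma side_eq_of_forall_mem_carrier (ho : ∀ h, ∃ i β, X.Hs (W i) β ⊆ X.Hs h (o h)) {y : X.V}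
    (hy : ∀ i, y ∈ X.carrier (W i)) {h : X.H} (hh : h ∉ Set.range W) : X.side h y = o h := by
  obtain ⟨i, β, hi⟩ := ho h
  obtain ⟨y', ⟨k, -, hk⟩, hWi⟩ := hy i
  have hyy' : X.side h y = X.side h y' := by
    by_contra hne
    exact hh ⟨i, (hk _ hWi).trans (hk _ hne).symm⟩
  by_cases hβ : X.side (W i) y = β
  · exact hi hβ
  · have hy'β : X.side (W i) y' = β :=
      (Bool.eq_not_iff.2 (Ne.symm hWi)).trans (Bool.eq_not_iff.2 (Ne.symm hβ)).symm
    exact hyy'.trans (hi hy'β)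

lemma exists_forall_mem_carrier [Finite ι] (hinj : Function.Injective W)
    (hW : Pairwise fun i j => X.Crosses (W i) (W j))
    (ho : ∀ h, ∃ i β, X.Hs (W i) β ⊆ X.Hs h (o h)) :
    ∃ y, ∀ i, y ∈ X.carrier (W i) := by
  obtain ⟨y, hyW, hyo⟩ := exists_corner hinj hW ho fun _ => true
  refine ⟨y, fun i => ?_⟩
  obtain ⟨y', hy'W, hy'o⟩ := exists_corner hinj hW ho fun j => decide (j ≠ i)
  refine ⟨y', ⟨W i, by simp [hyW, hy'W], fun k hk => ?_⟩, by simp [hyW, hy'W]⟩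
  by_cases hkW : k ∈ Set.range W
  · obtain ⟨j, rfl⟩ := hkW
    simp only [hyW, hy'W] at hk
    rw [show j = i by simpa using hk]
  · exact absurd ((hyo k hkW).trans (hy'o k hkW).symm) hk

end Cube

lemma exists_maximal_crossing {C : Set X.H} (hC : C.Pairwise X.Crosses) :
    ∃ M, C ⊆ M ∧ M.Pairwise X.Crosses ∧ ∀ h, ∃ h' ∈ M, ¬ X.Crosses h h' := by
  obtain ⟨M, hM, hCM⟩ := IsChain.exists_maxChain (hC.imp fun _ _ => Or.inl)
  refine ⟨M, hCM, hM.1.imp fun _ _ hc => hc.elim id crosses_symm, fun h => ?_⟩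
  by_contra! hcr
  have hhM : h ∈ M := by
    rw [hM.2 (hM.1.insert fun h' hh' _ => Or.inl (hcr h' hh')) (Set.subset_insert h M)]
    exact Set.mem_insert h M
  exact not_crosses_self h (hcr h hhM)

lemma exists_maximal_crossing_fin (hX : X.NoInfiniteCrossing) {C : Set X.H}
    (hC : C.Pairwise X.Crosses) :
    ∃ (n : ℕ) (W : Fin n → X.H), Function.Injective W ∧
      (∀ i j, i ≠ j → X.Crosses (W i) (W j)) ∧ (∀ h, ¬ ∀ i, X.Crosses h (W i)) ∧
      C ⊆ Set.range W := by
  obtain ⟨M, hCM, hM, hmax⟩ := exists_maximal_crossing hC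
  have : Finite M := (hX M hM).to_subtype
  obtain ⟨n, ⟨e⟩⟩ := Finite.exists_equiv_fin M
  refine ⟨n, fun i => e.symm i, Subtype.val_injective.comp e.symm.injective,
    fun i j hij => hM (e.symm i).2 (e.symm j).2 fun h => hij (e.symm.injective (Subtype.ext h)),
    fun h hall => ?_, fun c hc => ⟨e ⟨c, hCM hc⟩, by simp⟩⟩
  obtain ⟨h', hh', hnc⟩ := hmax h
  exact hnc (by simpa using hall (e ⟨h', hh'⟩))

lemma CombGeodComplete.exists_ne_forall_side_eq (hGC : X.CombGeodComplete)
    (hX : X.NoInfiniteCrossing) {C : Set X.H} (hC : C.Pairwise X.Crosses) (v : X.V) :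
    ∃ x ≠ v, ∀ h ∈ C, X.side h x = X.side h v := by
  obtain ⟨n, W, hinj, hW, hmax, hCW⟩ := exists_maximal_crossing_fin hX hC
  obtain ⟨o, ho⟩ := exists_orientation_of_maximal hmax
  obtain ⟨y, hy⟩ := exists_forall_mem_carrier hinj (fun i j => hW i j) ho
  obtain ⟨x, hxW, hxy⟩ := hGC n W hinj hW hmax (fun i => X.side (W i) v) (X.dist v y + 1)
  refine ⟨x, fun hxv => ?_, fun h hh => ?_⟩
  · subst hxv
    exact absurd (hxy y hy) (by omega)
  · obtain ⟨i, rfl⟩ := hCW hh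
    exact hxW i


/-- Only hyperplanes separating `v` from a 0-cube beyond `h` have their `v`-halfspace inside that
of `h`, so minimal `v`-halfspaces exist below each member of `S`; two minimal ones cross, since
otherwise one would contain the other. -/
lemma exists_pairwise_crosses_forall_Hs_subset (v : X.V) {S : Set X.H}
    (hS : ∀ h ∈ S, ∀ h' ∈ S, ∃ z, h ∈ X.sepF v z ∧ h' ∈ X.sepF v z) :
    ∃ C ⊆ S, C.Pairwise X.Crosses ∧
      ∀ h ∈ S, ∃ c ∈ C, X.Hs c (X.side c v) ⊆ X.Hs h (X.side h v) := by
  set f : X.H → Set X.V := fun h => X.Hs h (X.side h v)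
  have quarter : ∀ c c', MinimalFor (· ∈ S) f c → MinimalFor (· ∈ S) f c' → c ≠ c' →
      ∀ b', ∃ x, X.side c x = X.side c v ∧ X.side c' x = b' := by
    intro c c' hc hc' hne b'
    by_cases hb' : b' = X.side c' v
    · exact ⟨v, rfl, hb'.symm⟩
    by_contra! hq
    have hsub : f c ⊆ f c' := fun x hx =>
      (Bool.eq_not_iff.2 (hq x hx)).trans (Bool.eq_not_iff.2 (Ne.symm hb')).symm
    exact hne (eq_of_Hs_eq (hsub.antisymm (hc'.2 hc.1 hsub)))
  refine ⟨{c | MinimalFor (· ∈ S) f c}, fun c hc => hc.1, ?_, fun h hh => ?_⟩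
  · intro c hc c' hc' hne b b'
    by_cases hb : b = X.side c v
    · exact hb ▸ quarter c c' hc hc' hne b'
    by_cases hb' : b' = X.side c' v
    · obtain ⟨x, hx', hx⟩ := quarter c' c hc' hc hne.symm b
      exact ⟨x, hx, hx'.trans hb'.symm⟩
    obtain ⟨z, hz, hz'⟩ := hS c hc.1 c' hc'.1
    exact ⟨z, (Bool.eq_not_iff.2 (Ne.symm (mem_sepF.1 hz))).trans (Bool.eq_not_iff.2 hb).symm,
      (Bool.eq_not_iff.2 (Ne.symm (mem_sepF.1 hz'))).trans (Bool.eq_not_iff.2 hb').symm⟩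
  · obtain ⟨z, hz⟩ := X.halfspace_nonempty h (!X.side h v)
    have hfin : {h' | h' ∈ S ∧ f h' ⊆ f h}.Finite := (X.sep_finite v z).subset fun h' hh' e =>
      Bool.not_ne_self _ (hz.symm.trans (hh'.2 e.symm))
    obtain ⟨c, hc⟩ := hfin.exists_minimalFor f _ ⟨h, hh, subset_rfl⟩
    exact ⟨c, ⟨hc.1.1, fun j hj hjc => hc.2 ⟨hj, hjc.trans hc.1.2⟩ hjc⟩, hc.1.2⟩

lemma CombGeodComplete.exists_sepF_eq_singleton_notMem (hGC : X.CombGeodComplete)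
    (hX : X.NoInfiniteCrossing) (v : X.V) {S : Set X.H}
    (hS : ∀ h ∈ S, ∀ h' ∈ S, ∃ z, h ∈ X.sepF v z ∧ h' ∈ X.sepF v z) :
    ∃ v' h₀, X.sepF v v' = {h₀} ∧ h₀ ∉ S := by
  obtain ⟨C, -, hC, hSC⟩ := exists_pairwise_crosses_forall_Hs_subset v hS
  obtain ⟨x, hxv, hxC⟩ := hGC.exists_ne_forall_side_eq hX hC v
  obtain ⟨v', h₀, hv', hh₀⟩ := exists_sepF_eq_singleton_mem hxv.symm
  refine ⟨v', h₀, hv', fun hh₀S => ?_⟩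
  obtain ⟨c, hc, hch⟩ := hSC h₀ hh₀S
  exact mem_sepF.1 hh₀ (hch (hxC c hc)).symm

section Geodesics

variable {c : ℕ → X.V} {n : ℕ}

lemma IsGeodSeg.dist_add (hc : X.IsGeodSeg c n) {i j k : ℕ} (hij : i ≤ j) (hjk : j ≤ k)
    (hkn : k ≤ n) : X.dist (c i) (c j) + X.dist (c j) (c k) = X.dist (c i) (c k) := by
  rw [hc i j hij (hjk.trans hkn), hc j k hjk hkn, hc i k (hij.trans hjk) hkn]
  omega

lemma IsGeodSeg.sepF_subset (hc : X.IsGeodSeg c n) {j : ℕ} (hj : j ≤ n) :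
    X.sepF (c 0) (c j) ⊆ X.sepF (c 0) (c n) :=
  sepF_union_eq_of_dist_add (hc.dist_add (Nat.zero_le j) hj le_rfl) ▸ Finset.subset_union_left

lemma IsGeodSeg.reverse (hc : X.IsGeodSeg c n) : X.IsGeodSeg (fun i => c (n - i)) n := by
  intro i j hij hjn
  rw [dist_comm, hc (n - j) (n - i) (by omega) (by omega)]
  omega

lemma IsGeodSeg.cons (hc : X.IsGeodSeg c n) {v : X.V} {h₀ : X.H}
    (hv : X.sepF (c 0) v = {h₀}) (hh₀ : h₀ ∉ X.sepF (c 0) (c n)) :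
    X.IsGeodSeg (fun | 0 => v | i + 1 => c i) (n + 1) := by
  rintro (_ | i) (_ | j) hij hjn
  · simp
  · rw [dist_eq_add_one_of_sepF_eq_singleton hv fun h => hh₀ (hc.sepF_subset (by omega) h),
      hc 0 j (Nat.zero_le j) (by omega)]
    omega
  · omega
  · exact (hc i j (by omega) (by omega)).trans (by omega)

lemma exists_isGeodSeg (v x : X.V) :
    ∃ c, X.IsGeodSeg c (X.dist v x) ∧ c 0 = v ∧ c (X.dist v x) = x := by
  induction hd : X.dist v x generalizing v with
  | zero => exact ⟨fun _ => v, fun i j _ _ => by simp; omega, rfl, eq_of_dist_eq_zero hd⟩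
  | succ d ih =>
    obtain ⟨v', h₀, hv', hh₀⟩ := exists_sepF_eq_singleton_mem fun hvx : v = x => by simp_all
    have hv'v : X.sepF v' v = {h₀} := sepF_comm v v' ▸ hv'
    have hh₀' : h₀ ∉ X.sepF v' x := by
      have h₁ := Finset.ext_iff.1 hv' h₀
      simp only [mem_sepF, Finset.mem_singleton, iff_true] at h₁ hh₀ ⊢
      exact not_not.2
        ((Bool.eq_not_iff.2 (Ne.symm h₁)).trans (Bool.eq_not_iff.2 (Ne.symm hh₀)).symm)
    obtain ⟨c, hc, hc0, hcd⟩ := ih v' (by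
      have := dist_eq_add_one_of_sepF_eq_singleton hv'v hh₀'
      omega)
    exact ⟨_, hc.cons (hc0 ▸ hv'v) (hc0 ▸ hcd ▸ hh₀'), rfl, hcd⟩

lemma IsGeodesicRay.isGeodSeg {γ : ℕ → X.V} (hγ : X.IsGeodesicRay γ) (n : ℕ) :
    X.IsGeodSeg γ n := fun i j hij _ => hγ i j hij

lemma IsGeodesicLine.isGeodesicRay_add {α : ℤ → X.V} (hα : X.IsGeodesicLine α) (k : ℤ) :
    X.IsGeodesicRay fun i : ℕ => α (k + i) := fun i j hij => by
  have := hα (k + i) (k + j) (by omega)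
  dsimp only
  omega

lemma CombGeodComplete.exists_cons_isGeodSeg (hGC : X.CombGeodComplete)
    (hX : X.NoInfiniteCrossing) (hc : X.IsGeodSeg c n) :
    ∃ c', X.IsGeodSeg c' (n + 1) ∧ ∀ i, c' (i + 1) = c i := by
  obtain ⟨v, h₀, hv, hh₀⟩ := hGC.exists_sepF_eq_singleton_notMem hX (c 0)
    (S := X.sepF (c 0) (c n)) fun h hh h' hh' => ⟨c n, hh, hh'⟩
  exact ⟨_, hc.cons hv hh₀, fun _ => rfl⟩

lemma CombGeodComplete.exists_extend_isGeodSeg (hGC : X.CombGeodComplete)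
    (hX : X.NoInfiniteCrossing) (hc : X.IsGeodSeg c n) :
    ∃ c', X.IsGeodSeg c' (n + 1) ∧ ∀ i ≤ n, c' i = c i := by
  obtain ⟨r, hr, hrc⟩ := hGC.exists_cons_isGeodSeg hX hc.reverse
  refine ⟨fun i => r (n + 1 - i), hr.reverse, fun i hi => ?_⟩
  dsimp only
  rw [show n + 1 - i = n - i + 1 by omega, hrc, Nat.sub_sub_self hi]

lemma CombGeodComplete.exists_cons_isGeodesicRay (hGC : X.CombGeodComplete)
    (hX : X.NoInfiniteCrossing) {γ : ℕ → X.V} (hγ : X.IsGeodesicRay γ) :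
    ∃ γ', X.IsGeodesicRay γ' ∧ ∀ i, γ' (i + 1) = γ i := by
  obtain ⟨v, h₀, hv, hh₀⟩ := hGC.exists_sepF_eq_singleton_notMem hX (γ 0)
    (S := ⋃ n, X.sepF (γ 0) (γ n)) fun h hh h' hh' => by
      obtain ⟨m, hm⟩ := Set.mem_iUnion.1 hh
      obtain ⟨m', hm'⟩ := Set.mem_iUnion.1 hh'
      have hγm := hγ.isGeodSeg (max m m')
      exact ⟨γ (max m m'), hγm.sepF_subset (le_max_left m m') hm,
        hγm.sepF_subset (le_max_right m m') hm'⟩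
  refine ⟨fun | 0 => v | i + 1 => γ i, fun i j hij => ?_, fun _ => rfl⟩
  exact ((hγ.isGeodSeg j).cons hv fun h => hh₀ (Set.mem_iUnion.2 ⟨j, h⟩)) i j hij (by omega)

end Geodesics

lemma exists_isGeodesicRay_of_isGeodSeg
    (hext : ∀ (c : ℕ → X.V) (n : ℕ), X.IsGeodSeg c n →
      ∃ c', X.IsGeodSeg c' (n + 1) ∧ ∀ i ≤ n, c' i = c i)
    {c : ℕ → X.V} {n : ℕ} (hc : X.IsGeodSeg c n) :
    ∃ ρ, X.IsGeodesicRay ρ ∧ ∀ i ≤ n, ρ i = c i := by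
  choose! e he hec using hext
  let s : ℕ → ℕ → X.V := fun m => Nat.rec c (fun m s => e s (n + m)) m
  have hs : ∀ m, X.IsGeodSeg (s m) (n + m) := fun m => by
    induction m with
    | zero => exact hc
    | succ m ih => exact he _ _ ih
  have hss : ∀ m d i, i ≤ n + m → s (m + d) i = s m i := fun m d => by
    induction d with
    | zero => exact fun _ _ => rfl
    | succ d ih => exact fun i hi => (hec _ _ (hs (m + d)) i (by omega)).trans (ih i hi)
  refine ⟨fun i => s i i, fun i j hij => ?_, fun i hi => ?_⟩
  · obtain ⟨d, rfl⟩ := Nat.exists_eq_add_of_le hij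
    dsimp only
    rw [← hss i d i (by omega)]
    exact hs (i + d) i (i + d) hij (by omega)
  · have := hss 0 i i (by omega)
    rw [zero_add] at this
    exact this

lemma exists_isGeodesicLine_of_isGeodesicRay
    (hext : ∀ γ : ℕ → X.V, X.IsGeodesicRay γ →
      ∃ γ', X.IsGeodesicRay γ' ∧ ∀ i, γ' (i + 1) = γ i)
    {γ : ℕ → X.V} (hγ : X.IsGeodesicRay γ) :
    ∃ α : ℤ → X.V, X.IsGeodesicLine α ∧ ∀ i : ℕ, α i = γ i := by
  choose! e he hes using hext
  let r : ℕ → ℕ → X.V := fun m => Nat.rec γ (fun _ r => e r) m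
  have hr : ∀ m, X.IsGeodesicRay (r m) := fun m => by
    induction m with
    | zero => exact hγ
    | succ m ih => exact he _ ih
  have hrs : ∀ m d i, r (m + d) (i + d) = r m i := fun m d => by
    induction d with
    | zero => exact fun _ => rfl
    | succ d ih => exact fun i => (hes _ (hr (m + d)) (i + d)).trans (ih i)
  let α : ℤ → X.V := fun z => r z.natAbs (z + z.natAbs).toNat
  have hα : ∀ (z : ℤ) (m : ℕ), 0 ≤ z + m → α z = r m (z + m).toNat := fun z m hzm => by
    have h := hrs z.natAbs m (z + z.natAbs).toNat
    rw [show z.natAbs + m = m + z.natAbs by omega,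
      show (z + z.natAbs).toNat + m = (z + m).toNat + z.natAbs by omega, hrs] at h
    exact h.symm
  refine ⟨α, fun a b hab => ?_, fun i => ?_⟩
  · rw [hα a a.natAbs (by omega), hα b a.natAbs (by omega), hr a.natAbs _ _ (by omega)]
    omega
  · have := hα i 0 (by omega)
    simp only [CharP.cast_eq_zero, add_zero, Int.toNat_natCast] at this
    exact this

lemma combGeodComplete_of_forall_exists_isGeodesicRay
    (hext : ∀ (c : ℕ → X.V) (n : ℕ), X.IsGeodSeg c n →
      ∃ ρ, X.IsGeodesicRay ρ ∧ ∀ i ≤ n, ρ i = c i) :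
    X.CombGeodComplete := by
  intro n W hinj hW hmax χ R
  obtain ⟨o, ho⟩ := exists_orientation_of_maximal hmax
  obtain ⟨p, hpW, -⟩ := exists_corner hinj (fun i j => hW i j) ho fun i => !χ i
  obtain ⟨q, hqW, hqo⟩ := exists_corner hinj (fun i j => hW i j) ho χ
  obtain ⟨c, hc, hc0, hcd⟩ := exists_isGeodSeg p q
  obtain ⟨ρ, hρ, hρc⟩ := hext c _ hc
  set d := X.dist p q
  have hρ0 : ρ 0 = p := (hρc 0 (Nat.zero_le d)).trans hc0
  have hρd : ρ d = q := (hρc d le_rfl).trans hcd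
  have hdisj : Disjoint (X.sepF p q) (X.sepF q (ρ (d + R))) := by
    rw [← hρ0, ← hρd]
    exact disjoint_sepF_of_dist_add
      ((hρ.isGeodSeg (d + R)).dist_add (Nat.zero_le d) (by omega) le_rfl)
  have hWpq : ∀ i, W i ∈ X.sepF p q := fun i => by simp [hpW, hqW]
  refine ⟨ρ (d + R), fun i => ?_, fun y hy => ?_⟩
  · have := Finset.disjoint_left.1 hdisj (hWpq i)
    rw [mem_sepF, not_not, hqW] at this
    exact this.symm
  calc R = X.dist q (ρ (d + R)) := by rw [← hρd, hρ d (d + R) (by omega)]; omega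
    _ ≤ X.dist (ρ (d + R)) y := by
      rw [dist_eq_card_sepF, dist_eq_card_sepF]
      refine Finset.card_le_card fun h hh => ?_
      have hhW : h ∉ Set.range W := by
        rintro ⟨i, rfl⟩
        exact Finset.disjoint_left.1 hdisj (hWpq i) hh
      rw [mem_sepF] at hh ⊢
      rw [side_eq_of_forall_mem_carrier ho hy hhW, ← hqo h hhW]
      exact Ne.symm hh

end CCC

theorem comb_geodesically_complete_iff_general (X : CCC)
    (hX : X.NoInfiniteCrossing) :
    X.CombGeodComplete ↔
      ((∀ (c : ℕ → X.V) (n : ℕ), X.IsGeodSeg c n →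
          ∃ (α : ℤ → X.V) (k : ℤ), X.IsGeodesicLine α ∧
            ∀ i : ℕ, i ≤ n → α (k + (i : ℤ)) = c i) ∧
        (∀ γ : ℕ → X.V, X.IsGeodesicRay γ →
          ∃ (α : ℤ → X.V) (k : ℤ), X.IsGeodesicLine α ∧
            ∀ i : ℕ, α (k + (i : ℤ)) = γ i)) := by
  constructor
  · intro hGC
    have hline : ∀ γ, X.IsGeodesicRay γ →
        ∃ α : ℤ → X.V, X.IsGeodesicLine α ∧ ∀ i : ℕ, α i = γ i := fun _ =>
      CCC.exists_isGeodesicLine_of_isGeodesicRay fun _ => hGC.exists_cons_isGeodesicRay hX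
    refine ⟨fun c n hc => ?_, fun γ hγ => ?_⟩
    · obtain ⟨ρ, hρ, hρc⟩ := CCC.exists_isGeodesicRay_of_isGeodSeg
        (fun _ _ => hGC.exists_extend_isGeodSeg hX) hc
      obtain ⟨α, hα, hαρ⟩ := hline ρ hρ
      exact ⟨α, 0, hα, fun i hi => by rw [zero_add, hαρ, hρc i hi]⟩
    · obtain ⟨α, hα, hαγ⟩ := hline γ hγ
      exact ⟨α, 0, hα, fun i => by rw [zero_add, hαγ]⟩
  · rintro ⟨hseg, -⟩
    refine CCC.combGeodComplete_of_forall_exists_isGeodesicRay fun c n hc => ?_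
    obtain ⟨α, k, hα, hαc⟩ := hseg c n hc
    exact ⟨fun i => α (k + i), hα.isGeodesicRay_add k, hαc⟩

/-- Lemma 4.23.  A CAT(0) cube complex with at least one hyperplane and no
infinite family of pairwise-crossing hyperplanes is combinatorially
geodesically complete iff every combinatorial geodesic segment and every
combinatorial geodesic ray extends to a bi-infinite combinatorial geodesic. -/
theorem comb_geodesically_complete_iff (X : CCC) (hne : Nonempty X.H)
    (hX : X.NoInfiniteCrossing) :
    X.CombGeodComplete ↔
      ((∀ (c : ℕ → X.V) (n : ℕ), X.IsGeodSeg c n →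
          ∃ (α : ℤ → X.V) (k : ℤ), X.IsGeodesicLine α ∧
            ∀ i : ℕ, i ≤ n → α (k + (i : ℤ)) = c i) ∧
        (∀ γ : ℕ → X.V, X.IsGeodesicRay γ →
          ∃ (α : ℤ → X.V) (k : ℤ), X.IsGeodesicLine α ∧
            ∀ i : ℕ, α (k + (i : ℤ)) = γ i)) :=
  comb_geodesically_complete_iff_general X hX
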